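/- (The reduced rank regression estimate is a hard-thresholding fixed point) Suppose X ∈ ℝ^{n×p} (n ≥ p) has full column rank and ‖X‖₂ ≤ 1, and let Y ∈ ℝ^{n×m}. Let H = X(XᵀX)⁻¹Xᵀ and let YᵀHY = V D² Vᵀ be a spectral decomposition with D = diag(d₁,…,d_m), d₁ ≥ d₂ ≥ … ≥ d_m ≥ 0. Given λ > 0, let r = max{i : d_i ≥ λ}, let V_r consist of the first r columns of V, and define the RRR estimate B̂ = (XᵀX)⁻¹XᵀY V_r V_rᵀ. Then B̂ satisfies the fixed-point equation B̂ = Θ_H^σ( B̂ + XᵀY − XᵀX B̂ ; λ ), where Θ_H^σ is the matrix version of the hard-thresholding rule Θ_H(t;λ) = t·1_{|t|≥λ} applied to the singular values. -/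

import Mathlib

open Matrix

/-- `(U, σ, V)` is a (reduced) singular value decomposition of the real `n × m` matrix `B`. -/
def IsSVD {n m k : ℕ} (B : Matrix (Fin n) (Fin m) ℝ) (U : Matrix (Fin n) (Fin k) ℝ)
    (σ : Fin k → ℝ) (V : Matrix (Fin m) (Fin k) ℝ) : Prop :=
  Uᵀ * U = 1 ∧ Vᵀ * V = 1 ∧ Antitone σ ∧ (∀ i, 0 ≤ σ i) ∧ B = U * diagonal σ * Vᵀ

/-- The spectral norm `‖X‖₂` (largest singular value) of a real matrix. -/
noncomputable def matSpectralNorm {n p : ℕ} (X : Matrix (Fin n) (Fin p) ℝ) : ℝ :=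
  ‖LinearMap.toContinuousLinearMap (Matrix.toEuclideanLin X)‖

/-!
Write `S = XᵀX`, `K = XᵀY`, `G = KᵀS⁻¹K = YᵀHY` and `Q = V diag(1_{d ≥ λ}) Vᵀ`, so that
`B̂ = S⁻¹KQ` and the argument of the thresholding is `M = B̂ + K(1 - Q)`. Since `G` commutes with
`Q`, `B̂ᵀK(1 - Q) = QG(1 - Q) = 0`, hence `MᵀM = B̂ᵀB̂ + (1 - Q)KᵀK(1 - Q)` commutes with `Q`.
From `‖X‖₂ ≤ 1` we get `S ≤ 1`, so `S⁻¹ ≤ S⁻²` and `1 ≤ S⁻¹`; therefore `MᵀM ≥ QGQ ≥ λ²` on the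
range of `Q` and `MᵀM ≤ (1 - Q)G(1 - Q) < λ²` on its kernel. Thus `Q` is the spectral projection of
`MᵀM` for the eigenvalues `≥ λ²`. For any SVD `M = U diag(σ) Wᵀ` so is `P = W diag(1_{σ ≥ λ}) Wᵀ`,
and two such projections coincide. Finally `Θ_H^σ(M; λ) = MP = MQ = B̂`.
-/

open scoped MatrixOrder

lemma exists_nonneg_lt_forall_le {κ : Type*} [Fintype κ] {t : κ → ℝ} {c : ℝ} (hc : 0 < c)
    (ht : ∀ i, t i < c) : ∃ μ, 0 ≤ μ ∧ μ < c ∧ ∀ i, t i ≤ μ := by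
  classical
  set T := insert 0 (Finset.univ.image t)
  refine ⟨T.max' (Finset.insert_nonempty _ _), T.le_max' 0 (Finset.mem_insert_self _ _),
    (T.max'_lt_iff _).mpr ?_, fun i => T.le_max' (t i) (by simp [T])⟩
  simp only [T, Finset.mem_insert, Finset.mem_image, Finset.mem_univ, true_and]
  rintro y (rfl | ⟨i, rfl⟩)
  exacts [hc, ht i]

namespace Matrix

variable {ι κ : Type*} [Fintype ι] [Fintype κ]

lemma transpose_mul_mul_le_transpose_mul_mul {A B : Matrix ι ι ℝ} (h : A ≤ B)
    (C : Matrix ι κ ℝ) : Cᵀ * A * C ≤ Cᵀ * B * C := by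
  rw [le_iff] at h ⊢
  simpa [Matrix.mul_sub, Matrix.sub_mul] using h.conjTranspose_mul_mul_same C

lemma trace_le_trace {A B : Matrix ι ι ℝ} (h : A ≤ B) : A.trace ≤ B.trace := by
  simpa using (le_iff.mp h).trace_nonneg

lemma _root_.IsStarProjection.transpose_eq {P : Matrix ι ι ℝ} (hP : IsStarProjection P) :
    Pᵀ = P := by
  simpa [star_eq_conjTranspose] using hP.isSelfAdjoint.star_eq

lemma transpose_mul_self_le_one {n p : ℕ} {X : Matrix (Fin n) (Fin p) ℝ}
    (h : matSpectralNorm X ≤ 1) : Xᵀ * X ≤ 1 := by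
  have hnorm (k : ℕ) (x : Fin k → ℝ) : x ⬝ᵥ x = ‖WithLp.toLp 2 x‖ ^ 2 := by
    rw [EuclideanSpace.real_norm_sq_eq]
    simp [dotProduct, sq]
  rw [le_iff]
  refine PosSemidef.of_dotProduct_mulVec_nonneg ?_ fun x => ?_
  · simp [IsHermitian, conjTranspose_eq_transpose_of_trivial, transpose_sub, transpose_mul]
  have hX : ‖WithLp.toLp 2 (X *ᵥ x)‖ ≤ ‖WithLp.toLp 2 x‖ :=
    ((LinearMap.toContinuousLinearMap (toEuclideanLin X)).le_opNorm (WithLp.toLp 2 x)).trans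
      (mul_le_of_le_one_left (norm_nonneg _) h)
  have := pow_le_pow_left₀ (norm_nonneg _) hX 2
  rw [← hnorm, ← hnorm] at this
  simpa [sub_mulVec, ← mulVec_mulVec, dotProduct_mulVec, vecMul_transpose] using this

lemma posDef_transpose_mul_self_of_rank_eq {X : Matrix κ ι ℝ} (h : X.rank = Fintype.card ι) :
    (Xᵀ * X).PosDef := by
  have hker : LinearMap.ker X.mulVecLin = ⊥ := by
    have := LinearMap.finrank_range_add_finrank_ker X.mulVecLin
    rw [← rank, h, Module.finrank_fintype_fun_eq_card] at this
    exact Submodule.finrank_eq_zero.mp (by omega)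
  simpa using PosDef.conjTranspose_mul_self X (LinearMap.ker_eq_bot.mp hker)

section Inverse

variable [DecidableEq ι] {S : Matrix ι ι ℝ}

lemma one_le_inv_of_le_one (hS : S.PosDef) (h : S ≤ 1) : 1 ≤ S⁻¹ := by
  have hinv : S⁻¹ * S = 1 := nonsing_inv_mul S hS.det_pos.ne'.isUnit
  have hinv' : S * S⁻¹ = 1 := mul_nonsing_inv S hS.det_pos.ne'.isUnit
  have key : S⁻¹ - 1 = (1 - S) * S⁻¹ * (1 - S) + (1 - S) := by
    simp only [sub_mul, mul_sub, one_mul, mul_one, hinv, hinv']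
    abel
  rw [← sub_nonneg, key]
  have h1 : IsSelfAdjoint (1 - S) := (IsSelfAdjoint.one _).sub hS.isHermitian
  exact add_nonneg (h1.conjugate_nonneg hS.inv.posSemidef.nonneg) (sub_nonneg.mpr h)

lemma inv_le_inv_mul_inv_of_le_one (hS : S.PosDef) (h : S ≤ 1) : S⁻¹ ≤ S⁻¹ * S⁻¹ := by
  have hinv : S⁻¹ * S = 1 := nonsing_inv_mul S hS.det_pos.ne'.isUnit
  have := IsSelfAdjoint.conjugate_le_conjugate h (hS.inv.isHermitian : IsSelfAdjoint S⁻¹)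
  rwa [hinv, Matrix.one_mul, Matrix.mul_one] at this

end Inverse

section SpectralProjection

variable [DecidableEq ι]

/-- `P` is the spectral projection of `A` for its eigenvalues `≥ c`; in finite dimension the
strict bound `A < c` on the kernel of `P` is uniform, which is what `μ` records. -/
structure IsUpperSpectralProjection (A P : Matrix ι ι ℝ) (c : ℝ) : Prop where
  isStarProjection : IsStarProjection P
  commute : Commute A P
  smul_le_conj : c • P ≤ P * A * P
  exists_conj_one_sub_le : ∃ μ < c, (1 - P) * A * (1 - P) ≤ μ • (1 - P)

namespace IsUpperSpectralProjection

variable {A P Q : Matrix ι ι ℝ} {c : ℝ}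

theorem mul_one_sub_eq_zero (hP : IsUpperSpectralProjection A P c)
    (hQ : IsUpperSpectralProjection A Q c) : P * (1 - Q) = 0 := by
  obtain ⟨μ, hμc, hQA⟩ := hQ.exists_conj_one_sub_le
  set Z := P * (1 - Q)
  have hPZ : P * Z = Z := by rw [← Matrix.mul_assoc, hP.isStarProjection.isIdempotentElem.eq]
  have hZQ : Z * (1 - Q) = Z := by
    rw [Matrix.mul_assoc, hQ.isStarProjection.one_sub.isIdempotentElem.eq]
  have hZP : Zᵀ * P = Zᵀ := by rw [← hP.isStarProjection.transpose_eq, ← transpose_mul, hPZ]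
  have hQZ : (1 - Q) * Zᵀ = Zᵀ := by
    rw [← hQ.isStarProjection.one_sub.transpose_eq, ← transpose_mul, hZQ]
  -- `c ‖Z‖² ≤ tr (ZᵀAZ) = tr (ZAZᵀ) ≤ μ ‖Z‖²` in the Frobenius norm, and `μ < c`.
  have lower : c • (Zᵀ * Z) ≤ Zᵀ * A * Z := by
    simpa only [Matrix.mul_smul, Matrix.smul_mul, Matrix.mul_assoc, hPZ, ← Matrix.mul_assoc Zᵀ P,
      hZP] using transpose_mul_mul_le_transpose_mul_mul hP.smul_le_conj Z
  have upper : Z * A * Zᵀ ≤ μ • (Z * Zᵀ) := by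
    simpa only [transpose_transpose, Matrix.mul_smul, Matrix.smul_mul, Matrix.mul_assoc, hQZ,
      ← Matrix.mul_assoc Z (1 - Q), hZQ] using transpose_mul_mul_le_transpose_mul_mul hQA Zᵀ
  have hAZ : A * Z = Z * A :=
    hP.commute.mul_right ((Commute.one_right A).sub_right hQ.commute)
  have htrace : (Zᵀ * A * Z).trace = (Z * A * Zᵀ).trace := by
    rw [Matrix.mul_assoc, hAZ, ← Matrix.mul_assoc, trace_mul_cycle Z]
  have h1 := trace_le_trace lower
  have h2 := trace_le_trace upper
  rw [trace_smul, smul_eq_mul] at h1 h2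
  rw [trace_mul_comm Z] at h2
  have h0 : 0 ≤ (Zᵀ * Z).trace := by
    simpa using (posSemidef_conjTranspose_mul_self Z).trace_nonneg
  have hZ0 : (Zᵀ * Z).trace = 0 := by nlinarith
  simpa using (trace_conjTranspose_mul_self_eq_zero_iff (A := Z)).mp (by simpa using hZ0)

theorem eq (hP : IsUpperSpectralProjection A P c) (hQ : IsUpperSpectralProjection A Q c) :
    P = Q := by
  have hPQ : P = P * Q := by
    simpa [mul_sub, sub_eq_zero] using hP.mul_one_sub_eq_zero hQ
  have hQP : Q = Q * P := by
    simpa [mul_sub, sub_eq_zero] using hQ.mul_one_sub_eq_zero hP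
  have hPs := hP.isStarProjection.isSelfAdjoint.star_eq
  have hQs := hQ.isStarProjection.isSelfAdjoint.star_eq
  calc P = star P := hPs.symm
    _ = Q := by rw [hPQ, star_mul, hPs, hQs, ← hQP]

end IsUpperSpectralProjection

end SpectralProjection

section ThresholdProjection

variable [DecidableEq κ] {W : Matrix ι κ ℝ}

lemma conj_diagonal_mul_conj_diagonal {ι' : Type*} (U : Matrix ι' κ ℝ) (hW : Wᵀ * W = 1)
    (a b : κ → ℝ) : U * diagonal a * Wᵀ * (W * diagonal b * Wᵀ) = U * diagonal (a * b) * Wᵀ := by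
  rw [Matrix.mul_assoc, ← Matrix.mul_assoc Wᵀ, ← Matrix.mul_assoc Wᵀ, hW, Matrix.one_mul,
    ← Matrix.mul_assoc, Matrix.mul_assoc U, diagonal_mul_diagonal]
  rfl

lemma conj_diagonal_sub {ι' : Type*} (W : Matrix ι' κ ℝ) (a b : κ → ℝ) :
    W * diagonal a * Wᵀ - W * diagonal b * Wᵀ = W * diagonal (a - b) * Wᵀ := by
  rw [← Matrix.sub_mul, ← Matrix.mul_sub, diagonal_sub]
  rfl

lemma conj_diagonal_mono {a b : κ → ℝ} (h : a ≤ b) :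
    W * diagonal a * Wᵀ ≤ W * diagonal b * Wᵀ := by
  have hab : diagonal a ≤ diagonal b := by
    rw [le_iff, diagonal_sub]
    exact PosSemidef.diagonal (sub_nonneg.mpr h)
  simpa using transpose_mul_mul_le_transpose_mul_mul hab Wᵀ

lemma isStarProjection_mul_transpose [DecidableEq ι] (hW : Wᵀ * W = 1) :
    IsStarProjection (W * Wᵀ) :=
  ⟨by rw [IsIdempotentElem, Matrix.mul_assoc, ← Matrix.mul_assoc Wᵀ, hW, Matrix.one_mul],
    by simp [IsSelfAdjoint, star_eq_conjTranspose]⟩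

noncomputable def thresholdProjection (W : Matrix ι κ ℝ) (s : κ → ℝ) (lam : ℝ) : Matrix ι ι ℝ :=
  W * diagonal (fun i => if lam ≤ s i then (1 : ℝ) else 0) * Wᵀ

variable {s : κ → ℝ} {lam : ℝ}

lemma isStarProjection_thresholdProjection (hW : Wᵀ * W = 1) :
    IsStarProjection (thresholdProjection W s lam) := by
  refine ⟨?_, ?_⟩
  · rw [IsIdempotentElem, thresholdProjection, conj_diagonal_mul_conj_diagonal _ hW]
    congr
    funext i
    by_cases h : lam ≤ s i <;> simp [h]
  · simp [IsSelfAdjoint, thresholdProjection, star_eq_conjTranspose, Matrix.mul_assoc]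

lemma commute_thresholdProjection (hW : Wᵀ * W = 1) (a : κ → ℝ) :
    Commute (W * diagonal a * Wᵀ) (thresholdProjection W s lam) := by
  rw [Commute, SemiconjBy, thresholdProjection, conj_diagonal_mul_conj_diagonal _ hW,
    conj_diagonal_mul_conj_diagonal _ hW, mul_comm]

lemma smul_thresholdProjection_le (hW : Wᵀ * W = 1) (hlam : 0 ≤ lam) :
    lam ^ 2 • thresholdProjection W s lam ≤ thresholdProjection W s lam *
      (W * diagonal (fun i => s i ^ 2) * Wᵀ) * thresholdProjection W s lam := by
  rw [thresholdProjection, conj_diagonal_mul_conj_diagonal _ hW,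
    conj_diagonal_mul_conj_diagonal _ hW, ← Matrix.smul_mul, ← Matrix.mul_smul, ← diagonal_smul]
  refine conj_diagonal_mono fun i => ?_
  by_cases h : lam ≤ s i
  · simpa [h] using pow_le_pow_left₀ hlam h 2
  · simp [h]

lemma exists_one_sub_thresholdProjection_le [DecidableEq ι] (hW : Wᵀ * W = 1) (hlam : 0 < lam)
    (hs : ∀ i, 0 ≤ s i) : ∃ μ < lam ^ 2,
      (1 - thresholdProjection W s lam) * (W * diagonal (fun i => s i ^ 2) * Wᵀ) *
        (1 - thresholdProjection W s lam) ≤ μ • (1 - thresholdProjection W s lam) := by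
  set P := thresholdProjection W s lam
  set T := W * diagonal (fun i => s i ^ 2) * Wᵀ
  obtain ⟨μ, hμ0, hμ, hle⟩ := exists_nonneg_lt_forall_le (pow_pos hlam 2)
    (t := fun i => if lam ≤ s i then 0 else s i ^ 2) fun i => by
      by_cases h : lam ≤ s i
      · simpa [h] using pow_pos hlam 2
      · simpa [h] using pow_lt_pow_left₀ (not_le.mp h) (hs i) two_ne_zero
  refine ⟨μ, hμ, ?_⟩
  have hTP : Commute T (1 - P) :=
    (Commute.one_right T).sub_right (commute_thresholdProjection hW _)
  calc (1 - P) * T * (1 - P) = T - T * P := by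
        rw [← hTP.eq, Matrix.mul_assoc,
          (isStarProjection_thresholdProjection hW).one_sub.isIdempotentElem.eq, Matrix.mul_sub,
          Matrix.mul_one]
    _ ≤ μ • (W * Wᵀ - P) := by
        simp only [T, P, thresholdProjection]
        rw [conj_diagonal_mul_conj_diagonal _ hW, conj_diagonal_sub W,
          ← (show W * diagonal (1 : κ → ℝ) * Wᵀ = W * Wᵀ by simp), conj_diagonal_sub W,
          ← Matrix.smul_mul, ← Matrix.mul_smul, ← diagonal_smul]
        refine conj_diagonal_mono fun i => ?_
        by_cases h : lam ≤ s i
        · simp [h]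
        · simpa [h] using hle i
    _ ≤ μ • (1 - P) := by
        rw [le_iff, ← smul_sub, sub_sub_sub_cancel_right]
        exact (isStarProjection_mul_transpose hW).one_sub_nonneg.posSemidef.smul hμ0

lemma isUpperSpectralProjection_thresholdProjection [DecidableEq ι] (hW : Wᵀ * W = 1)
    (hlam : 0 < lam) (hs : ∀ i, 0 ≤ s i) :
    IsUpperSpectralProjection (W * diagonal (fun i => s i ^ 2) * Wᵀ)
      (thresholdProjection W s lam) (lam ^ 2) :=
  ⟨isStarProjection_thresholdProjection hW, commute_thresholdProjection hW _,
    smul_thresholdProjection_le hW hlam.le, exists_one_sub_thresholdProjection_le hW hlam hs⟩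

end ThresholdProjection

lemma commute_transpose_mul_self [DecidableEq κ] {M : Matrix ι κ ℝ} {Q : Matrix κ κ ℝ}
    (hQ : IsStarProjection Q) (h : (M * Q)ᵀ * (M * (1 - Q)) = 0) : Commute (Mᵀ * M) Q := by
  have h' := congrArg transpose h
  rw [transpose_mul, transpose_transpose, transpose_zero, transpose_mul,
    hQ.one_sub.transpose_eq] at h'
  rw [transpose_mul, hQ.transpose_eq] at h
  have e1 : (1 - Q) * (Mᵀ * M) * Q = 0 := by simpa only [Matrix.mul_assoc] using h'
  have e2 : Q * (Mᵀ * M) * (1 - Q) = 0 := by simpa only [Matrix.mul_assoc] using h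
  rw [sub_mul, sub_mul, one_mul, sub_eq_zero] at e1
  rw [mul_sub, mul_one, sub_eq_zero] at e2
  exact e1.trans e2.symm

end Matrix

namespace IsSVD

variable {n m k : ℕ} {B : Matrix (Fin n) (Fin m) ℝ} {U : Matrix (Fin n) (Fin k) ℝ}
  {σ : Fin k → ℝ} {V : Matrix (Fin m) (Fin k) ℝ}

lemma transpose_mul_self (h : IsSVD B U σ V) :
    Bᵀ * B = V * diagonal (fun i => σ i ^ 2) * Vᵀ := by
  obtain ⟨hU, -, -, -, rfl⟩ := h
  simp only [transpose_mul, transpose_transpose, diagonal_transpose, Matrix.mul_assoc]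
  rw [← Matrix.mul_assoc Uᵀ, hU, Matrix.one_mul, ← Matrix.mul_assoc (diagonal σ),
    diagonal_mul_diagonal]
  simp only [sq]

lemma isUpperSpectralProjection {lam : ℝ} (h : IsSVD B U σ V) (hlam : 0 < lam) :
    IsUpperSpectralProjection (Bᵀ * B) (thresholdProjection V σ lam) (lam ^ 2) :=
  h.transpose_mul_self ▸ isUpperSpectralProjection_thresholdProjection h.2.1 hlam h.2.2.2.1

lemma mul_thresholdProjection (h : IsSVD B U σ V) (lam : ℝ) :
    B * thresholdProjection V σ lam =
      U * diagonal (fun i => if lam ≤ σ i then σ i else 0) * Vᵀ := by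
  obtain ⟨-, hV, -, -, rfl⟩ := h
  rw [thresholdProjection, conj_diagonal_mul_conj_diagonal _ hV]
  congr
  funext i
  by_cases h : lam ≤ σ i <;> simp [h]

end IsSVD

namespace ReducedRankRegression

variable {ι κ : Type*} [Fintype ι] [Fintype κ] [DecidableEq κ]
  {R : Matrix ι ι ℝ} {K M : Matrix ι κ ℝ} {Q : Matrix κ κ ℝ}

lemma mul_projection_eq (hQ : IsStarProjection Q) (hM : M = R * K * Q + K * (1 - Q)) :
    M * Q = R * K * Q := by
  rw [hM, Matrix.add_mul, Matrix.mul_assoc (R * K), hQ.isIdempotentElem.eq, Matrix.mul_assoc K,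
    hQ.one_sub_mul_self, Matrix.mul_zero, add_zero]

lemma mul_one_sub_projection_eq (hQ : IsStarProjection Q) (hM : M = R * K * Q + K * (1 - Q)) :
    M * (1 - Q) = K * (1 - Q) := by
  rw [hM, Matrix.add_mul, Matrix.mul_assoc (R * K), hQ.mul_one_sub_self, Matrix.mul_zero,
    zero_add, Matrix.mul_assoc K, hQ.one_sub.isIdempotentElem.eq]

variable [DecidableEq ι]

lemma add_sub_mul_eq_add_mul_one_sub {S : Matrix ι ι ℝ} (hSR : S * R = 1) :
    R * K * Q + K - S * (R * K * Q) = R * K * Q + K * (1 - Q) := by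
  rw [← Matrix.mul_assoc, ← Matrix.mul_assoc, hSR, Matrix.one_mul, Matrix.mul_sub,
    Matrix.mul_one]
  abel

lemma isUpperSpectralProjection {c : ℝ} (hR : R.IsSymm) (h1R : 1 ≤ R) (hRR : R ≤ R * R)
    (hG : IsUpperSpectralProjection (Kᵀ * R * K) Q c) (hM : M = R * K * Q + K * (1 - Q)) :
    IsUpperSpectralProjection (Mᵀ * M) Q c := by
  have hQ := hG.isStarProjection
  have hQt := hQ.transpose_eq
  have hQt' := hQ.one_sub.transpose_eq
  obtain ⟨μ, hμ, hGhigh⟩ := hG.exists_conj_one_sub_le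
  refine ⟨hQ, commute_transpose_mul_self hQ ?_, hG.smul_le_conj.trans ?_, μ, hμ, le_trans ?_ hGhigh⟩
  · rw [mul_projection_eq hQ hM, mul_one_sub_projection_eq hQ hM]
    calc (R * K * Q)ᵀ * (K * (1 - Q)) = Q * (Kᵀ * R * K) * (1 - Q) := by
          simp only [transpose_mul, hR.eq, hQt, Matrix.mul_assoc]
      _ = 0 := by rw [← hG.commute.eq, Matrix.mul_assoc, hQ.mul_one_sub_self, Matrix.mul_zero]
  · have hMQ : Q * (Mᵀ * M) * Q = (M * Q)ᵀ * (M * Q) := by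
      simp only [transpose_mul, hQt, Matrix.mul_assoc]
    rw [hMQ, mul_projection_eq hQ hM]
    simpa only [transpose_mul, hR.eq, hQt, Matrix.mul_assoc] using
      transpose_mul_mul_le_transpose_mul_mul hRR (K * Q)
  · have hMQ : (1 - Q) * (Mᵀ * M) * (1 - Q) = (M * (1 - Q))ᵀ * (M * (1 - Q)) := by
      simp only [transpose_mul, hQt', Matrix.mul_assoc]
    rw [hMQ, mul_one_sub_projection_eq hQ hM]
    have h := transpose_mul_mul_le_transpose_mul_mul h1R (K * (1 - Q))
    rw [Matrix.mul_one] at h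
    simpa only [transpose_mul, hQt', Matrix.mul_assoc] using h

end ReducedRankRegression

theorem rrr_hard_thresholding_fixed_point_general {n p m : ℕ}
    (X : Matrix (Fin n) (Fin p) ℝ) (hrank : X.rank = p)
    (hXnorm : matSpectralNorm X ≤ 1)
    (Y : Matrix (Fin n) (Fin m) ℝ)
    (V : Matrix (Fin m) (Fin m) ℝ) (hV : Vᵀ * V = 1)
    (d : Fin m → ℝ) (hd0 : ∀ i, 0 ≤ d i)
    (hspec : Yᵀ * (X * (Xᵀ * X)⁻¹ * Xᵀ) * Y = V * diagonal (fun i => d i ^ 2) * Vᵀ)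
    (lam : ℝ) (hlam : 0 < lam)
    (Bhat : Matrix (Fin p) (Fin m) ℝ)
    (hBhat : Bhat = (Xᵀ * X)⁻¹ * Xᵀ * Y
      * (V * diagonal (fun i => if lam ≤ d i then (1:ℝ) else 0) * Vᵀ)) :
    ∀ (UM : Matrix (Fin p) (Fin (min p m)) ℝ) (σM : Fin (min p m) → ℝ)
      (VM : Matrix (Fin m) (Fin (min p m)) ℝ),
      IsSVD (Bhat + Xᵀ * Y - Xᵀ * X * Bhat) UM σM VM →
      Bhat = UM * diagonal (fun i => if lam ≤ σM i then σM i else 0) * VMᵀ := by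
  intro UM σM VM hsvd
  have hS : (Xᵀ * X).PosDef := posDef_transpose_mul_self_of_rank_eq (by simpa using hrank)
  have hS1 : Xᵀ * X ≤ 1 := transpose_mul_self_le_one hXnorm
  have hB : Bhat = (Xᵀ * X)⁻¹ * (Xᵀ * Y) * thresholdProjection V d lam := by
    rw [hBhat, thresholdProjection]
    simp only [Matrix.mul_assoc]
  have hM : Bhat + Xᵀ * Y - Xᵀ * X * Bhat = (Xᵀ * X)⁻¹ * (Xᵀ * Y) * thresholdProjection V d lam
      + Xᵀ * Y * (1 - thresholdProjection V d lam) := by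
    rw [hB]
    exact ReducedRankRegression.add_sub_mul_eq_add_mul_one_sub (mul_nonsing_inv _ hS.det_pos.ne'.isUnit)
  have hG : (Xᵀ * Y)ᵀ * (Xᵀ * X)⁻¹ * (Xᵀ * Y) = V * diagonal (fun i => d i ^ 2) * Vᵀ := by
    rw [← hspec]
    simp only [transpose_mul, transpose_transpose, Matrix.mul_assoc]
  have hQ := ReducedRankRegression.isUpperSpectralProjection
    (by simpa using hS.inv.isHermitian) (one_le_inv_of_le_one hS hS1)
    (inv_le_inv_mul_inv_of_le_one hS hS1)
    (hG ▸ isUpperSpectralProjection_thresholdProjection hV hlam hd0) hM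
  rw [← hsvd.mul_thresholdProjection, (hsvd.isUpperSpectralProjection hlam).eq hQ,
    ReducedRankRegression.mul_projection_eq hQ.isStarProjection hM, hB]

/-- The reduced rank regression estimate is a hard-thresholding fixed point: with `X` of
full column rank, `‖X‖₂ ≤ 1`, spectral decomposition `YᵀHY = V D² Vᵀ` (`H` the hat matrix,
`d` nonincreasing and nonnegative), `λ > 0`, and the RRR estimate
`B̂ = (XᵀX)⁻¹XᵀY V_r V_rᵀ` (where `V_r V_rᵀ = V diag(1_{d_i ≥ λ}) Vᵀ` selects the
eigendirections with `d_i ≥ λ`), the estimate `B̂` satisfies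
`B̂ = Θ_H^σ(B̂ + XᵀY − XᵀX B̂; λ)` — computed through any SVD of the argument, with the
hard-thresholding rule `Θ_H(t;λ) = t·1_{|t| ≥ λ}` applied to the singular values. -/
theorem rrr_hard_thresholding_fixed_point {n p m : ℕ} (hpn : p ≤ n)
    (X : Matrix (Fin n) (Fin p) ℝ) (hrank : X.rank = p)
    (hXnorm : matSpectralNorm X ≤ 1)
    (Y : Matrix (Fin n) (Fin m) ℝ)
    (V : Matrix (Fin m) (Fin m) ℝ) (hV : Vᵀ * V = 1)
    (d : Fin m → ℝ) (hd : Antitone d) (hd0 : ∀ i, 0 ≤ d i)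
    (hspec : Yᵀ * (X * (Xᵀ * X)⁻¹ * Xᵀ) * Y = V * diagonal (fun i => d i ^ 2) * Vᵀ)
    (lam : ℝ) (hlam : 0 < lam)
    (Bhat : Matrix (Fin p) (Fin m) ℝ)
    (hBhat : Bhat = (Xᵀ * X)⁻¹ * Xᵀ * Y
      * (V * diagonal (fun i => if lam ≤ d i then (1:ℝ) else 0) * Vᵀ)) :
    ∀ (UM : Matrix (Fin p) (Fin (min p m)) ℝ) (σM : Fin (min p m) → ℝ)
      (VM : Matrix (Fin m) (Fin (min p m)) ℝ),
      IsSVD (Bhat + Xᵀ * Y - Xᵀ * X * Bhat) UM σM VM →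
      Bhat = UM * diagonal (fun i => if lam ≤ σM i then σM i else 0) * VMᵀ :=
  rrr_hard_thresholding_fixed_point_general X hrank hXnorm Y V hV d hd0 hspec lam hlam Bhat hBhat
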